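/- Let x_L, x_R, ν_L, ν_R, T ∈ ℝ and define x̃_L(t) = x_L + (t - T)ν_L, x̃_R(t) = x_R + (t - T)ν_R, and α(x,t) = -ν_L·(x - x̃_R(t))/(x̃_R(t) - x̃_L(t)) + ν_R·(x - x̃_L(t))/(x̃_R(t) - x̃_L(t)). Assume x̃_R(t) ≠ x̃_L(t) for all t in an open interval J containing T, and let Ψ : ℝ → ℝ be differentiable. Define ξ(x,t) = x_L + (x_R - x_L)·(x - x̃_L(t))/(x̃_R(t) - x̃_L(t)) and ψ(x,t) = Ψ(ξ(x,t)). Then ψ satisfies the adjoint transport equation ∂_t ψ(x,t) + α(x,t)·∂_x ψ(x,t) = 0 for all x ∈ ℝ and t ∈ J, together with the terminal condition ψ(x, T) = Ψ(x) for all x ∈ ℝ. -/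

import Mathlib

/-!
The velocity `α`, interpolating linearly between the endpoint velocities, moves every point of
the dynamic interval `[x̃_L t, x̃_R t]` so that its normalized coordinate
`(x - x̃_L t) / (x̃_R t - x̃_L t)` stays constant: that coordinate solves the transport equation,
and by the chain rule so does every differentiable function of it, in particular `Ψ ∘ ξ`.
At `t = T` the interval is `[x_L, x_R]` and `ξ` is the identity.
-/

theorem deriv_comp_add_mul_deriv_comp_eq_zero {f : ℝ → ℝ → ℝ} {Ψ : ℝ → ℝ} {x t c ft fx : ℝ}
    (hΨ : DifferentiableAt ℝ Ψ (f x t)) (ht : HasDerivAt (fun s => f x s) ft t)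
    (hx : HasDerivAt (fun y => f y t) fx x) (htransport : ft + c * fx = 0) :
    deriv (fun s => Ψ (f x s)) t + c * deriv (fun y => Ψ (f y t)) x = 0 := by
  have hΨt : HasDerivAt (fun s => Ψ (f x s)) (deriv Ψ (f x t) * ft) t :=
    hΨ.hasDerivAt.comp t ht
  have hΨx : HasDerivAt (fun y => Ψ (f y t)) (deriv Ψ (f x t) * fx) x :=
    hΨ.hasDerivAt.comp x hx
  rw [hΨt.deriv, hΨx.deriv, mul_left_comm, ← mul_add, htransport, mul_zero]

theorem hasDerivAt_add_sub_mul (x₀ T ν t : ℝ) :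
    HasDerivAt (fun s => x₀ + (s - T) * ν) ν t := by
  simpa using (((hasDerivAt_id t).sub_const T).mul_const ν).const_add x₀

section Rescale

variable {a b : ℝ → ℝ} {a' b' : ℝ} (p q x t : ℝ)

theorem hasDerivAt_rescale_time (ha : HasDerivAt a a' t) (hb : HasDerivAt b b' t)
    (hab : b t ≠ a t) :
    HasDerivAt (fun s => p + q * (x - a s) / (b s - a s))
      (q * ((-a') * (b t - a t) - (x - a t) * (b' - a')) / (b t - a t) ^ 2) t := by
  have hD : b t - a t ≠ 0 := sub_ne_zero.mpr hab
  simpa only [mul_div_assoc, neg_mul, Pi.sub_apply, Pi.div_apply] using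
    (((ha.const_sub x).div (hb.sub ha) hD).const_mul q).const_add p

theorem hasDerivAt_rescale_space :
    HasDerivAt (fun y => p + q * (y - a t) / (b t - a t)) (q / (b t - a t)) x := by
  simpa using ((((hasDerivAt_id x).sub_const (a t)).const_mul q).div_const (b t - a t)).const_add p

theorem deriv_comp_rescale_transport_eq_zero {Ψ : ℝ → ℝ}
    (hΨ : DifferentiableAt ℝ Ψ (p + q * (x - a t) / (b t - a t)))
    (ha : HasDerivAt a a' t) (hb : HasDerivAt b b' t) (hab : b t ≠ a t) :
    deriv (fun s => Ψ (p + q * (x - a s) / (b s - a s))) t +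
      (-a' * (x - b t) / (b t - a t) + b' * (x - a t) / (b t - a t)) *
        deriv (fun y => Ψ (p + q * (y - a t) / (b t - a t))) x = 0 := by
  refine deriv_comp_add_mul_deriv_comp_eq_zero (f := fun y s => p + q * (y - a s) / (b s - a s))
    hΨ (hasDerivAt_rescale_time p q x t ha hb hab) (hasDerivAt_rescale_space p q x t) ?_
  have hD : b t - a t ≠ 0 := sub_ne_zero.mpr hab
  field_simp
  ring

end Rescale

theorem stmt_4_general (xL xR νL νR T : ℝ)
    (J : Set ℝ) (hTJ : T ∈ J)
    (xtL xtR : ℝ → ℝ)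
    (hxtL : ∀ t, xtL t = xL + (t - T) * νL)
    (hxtR : ∀ t, xtR t = xR + (t - T) * νR)
    (hne : ∀ t ∈ J, xtR t ≠ xtL t)
    (Ψ : ℝ → ℝ) (hΨ : Differentiable ℝ Ψ)
    (α ξ ψ : ℝ → ℝ → ℝ)
    (hα : ∀ x t, α x t =
      -νL * (x - xtR t) / (xtR t - xtL t) + νR * (x - xtL t) / (xtR t - xtL t))
    (hξ : ∀ x t, ξ x t = xL + (xR - xL) * (x - xtL t) / (xtR t - xtL t))
    (hψ : ∀ x t, ψ x t = Ψ (ξ x t)) :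
    (∀ x : ℝ, ∀ t ∈ J,
      deriv (fun s => ψ x s) t + α x t * deriv (fun y => ψ y t) x = 0) ∧
    (∀ x : ℝ, ψ x T = Ψ x) := by
  have hvel {x₀ ν : ℝ} {x : ℝ → ℝ} (hx : ∀ t, x t = x₀ + (t - T) * ν) (t : ℝ) :
      HasDerivAt x ν t := by
    rw [funext hx]
    exact hasDerivAt_add_sub_mul x₀ T ν t
  refine ⟨fun x t ht => ?_, fun x => ?_⟩
  · simp only [hψ, hξ, hα]
    exact deriv_comp_rescale_transport_eq_zero _ _ x t (hΨ _) (hvel hxtL t) (hvel hxtR t)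
      (hne t ht)
  · have hxR : xR - xL ≠ 0 := by simpa [hxtL, hxtR, sub_eq_zero] using hne T hTJ
    rw [hψ, hξ, hxtL, hxtR]
    simp only [sub_self, zero_mul, add_zero, mul_div_cancel_left₀ _ hxR, add_sub_cancel]

theorem stmt_4 (xL xR νL νR T : ℝ)
    (J : Set ℝ) (hJopen : IsOpen J) (hTJ : T ∈ J) (hJconn : J.OrdConnected)
    (xtL xtR : ℝ → ℝ)
    (hxtL : ∀ t, xtL t = xL + (t - T) * νL)
    (hxtR : ∀ t, xtR t = xR + (t - T) * νR)
    (hne : ∀ t ∈ J, xtR t ≠ xtL t)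
    (Ψ : ℝ → ℝ) (hΨ : Differentiable ℝ Ψ)
    (α ξ ψ : ℝ → ℝ → ℝ)
    (hα : ∀ x t, α x t =
      -νL * (x - xtR t) / (xtR t - xtL t) + νR * (x - xtL t) / (xtR t - xtL t))
    (hξ : ∀ x t, ξ x t = xL + (xR - xL) * (x - xtL t) / (xtR t - xtL t))
    (hψ : ∀ x t, ψ x t = Ψ (ξ x t)) :
    (∀ x : ℝ, ∀ t ∈ J,
      deriv (fun s => ψ x s) t + α x t * deriv (fun y => ψ y t) x = 0) ∧
    (∀ x : ℝ, ψ x T = Ψ x) :=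
  stmt_4_general xL xR νL νR T J hTJ xtL xtR hxtL hxtR hne Ψ hΨ α ξ ψ hα hξ hψ
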